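/- arXiv:2106.14979 — 3 statements merged into one kernel-verified Lean document; each statement's English description precedes it below -/
import Mathlib

section
/- With mean rewards r̄ = (1/4, 1/2, 1) for items a₁, a₂, a₃ having restricted features x_{a₁} = (0,−1), x_{a₂} = (1,0), x_{a₃} = (0,1), the 'training-on-all' least-squares solution θ = (r̄₂, (r̄₃ − r̄₁)/2) = (1/2, 3/8) satisfies ⟨θ, x_{a₂}⟩ > ⟨θ, x_{a₃}⟩, so the nominator with pool {a₂, a₃} selects the suboptimal item a₂ (whose mean reward 1/2 is less than r̄₃ = 1); whereas the 'training-on-own' solution θ' = (r̄₂, r̄₃) = (1/2, 1) satisfies ⟨θ', x_{a₃}⟩ > ⟨θ', x_{a₂}⟩ and correctly selects a₃. -/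
/-! On the restricted features the squared loss splits into `(r₂ - β₁)²`, fitted by `a₂` alone,
and `(r₁ + β₂)² + (r₃ - β₂)²`, in which `a₁` and `a₃` pull `β₂` in opposite directions because
`x_{a₁} = -x_{a₃}`. Training on all items therefore sets `β₂` to the compromise `(r₃ - r₁)/2`, and
the low reward of `a₁`, which is outside the pool, pushes the predicted score of `a₃` below that
of `a₂`. Training on the pool only fits both rewards exactly. -/

theorem sq_add_add_sq_sub_midpoint_le {K : Type*} [Field K] [LinearOrder K]
    [IsStrictOrderedRing K] (a c t : K) :
    (a + (c - a) / 2) ^ 2 + (c - (c - a) / 2) ^ 2 ≤ (a + t) ^ 2 + (c - t) ^ 2 := by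
  linear_combination 2 * sq_nonneg (t - (c - a) / 2)

/-- With mean rewards `r̄ = (1/4, 1/2, 1)` and restricted item features
`x₁ = (0,−1)`, `x₂ = (1,0)`, `x₃ = (0,1)`, the training-on-all least-squares
solution `θ = (1/2, 3/8)` makes the nominator with pool `{a₂, a₃}` select the
suboptimal item `a₂`, whereas the training-on-own solution `θ' = (1/2, 1)`
correctly selects `a₃`. -/
theorem training_on_all_fails_training_on_own_succeeds :
    let r1 : ℝ := 1 / 4
    let r2 : ℝ := 1 / 2
    let r3 : ℝ := 1
    let x1 : ℝ × ℝ := (0, -1)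
    let x2 : ℝ × ℝ := (1, 0)
    let x3 : ℝ × ℝ := (0, 1)
    let dot : ℝ × ℝ → ℝ × ℝ → ℝ := fun u v => u.1 * v.1 + u.2 * v.2
    let θ : ℝ × ℝ := (r2, (r3 - r1) / 2)
    let θ' : ℝ × ℝ := (r2, r3)
    -- θ is the training-on-all least-squares solution
    (∀ β : ℝ × ℝ,
      (r1 - dot θ x1) ^ 2 + (r2 - dot θ x2) ^ 2 + (r3 - dot θ x3) ^ 2
        ≤ (r1 - dot β x1) ^ 2 + (r2 - dot β x2) ^ 2 + (r3 - dot β x3) ^ 2)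
    ∧ θ = (1 / 2, 3 / 8)
    -- training-on-all selects the suboptimal item a₂ from the pool {a₂, a₃}
    ∧ dot θ x2 > dot θ x3
    ∧ r2 < r3
    -- θ' is the training-on-own least-squares solution (fit on the pool only)
    ∧ (∀ β : ℝ × ℝ,
        (r2 - dot θ' x2) ^ 2 + (r3 - dot θ' x3) ^ 2
          ≤ (r2 - dot β x2) ^ 2 + (r3 - dot β x3) ^ 2)
    ∧ θ' = (1 / 2, 1)
    -- training-on-own correctly selects a₃
    ∧ dot θ' x3 > dot θ' x2 := by
  intro r1 r2 r3 x1 x2 x3 dot θ θ'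
  refine ⟨fun β => ?_, by norm_num [θ, r1, r2, r3], by norm_num [dot, θ, x2, x3, r1, r2, r3],
    by norm_num [r2, r3], fun β => ?_, by norm_num [θ', r2, r3],
    by norm_num [dot, θ', x2, x3, r2, r3]⟩
  · simp only [dot, θ, x1, x2, x3]
    linear_combination sq_add_add_sq_sub_midpoint_le r1 r3 β.2 + sq_nonneg (r2 - β.1)
  · simp only [dot, θ', x2, x3]
    linear_combination sq_nonneg (r2 - β.1) + sq_nonneg (r3 - β.2)
end

section
/- Under the bandit construction with contexts drawn uniformly from {X_{(1)}, …, X_{(4)}} (X = [[1,0,0,−1],[0,1,0,−1],[0,0,1,0],[0,0,0,1]], r̄ = (3/4, 7/8, 1/6, 1)), nominators restricted to the last two feature columns, pools A₁ = {a₁}, A₂ = {a₂,a₃,a₄}, and a nominator satisfying the greedy-selection assumption with constant δ > 0: if the nominator's estimate converges in probability to the 'training-on-own' limit θ₂* = (1/6, 1/16), then the expected two-stage regret satisfies limsup_T E[R_T^{2s}]/T ≥ Δδ/4 > 0 with Δ = 1/6, because θ*₂,₂ = 1/16 > 0 causes the nominator to miss a₂ whenever X_{(2)} is drawn. -/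
/-!
When the context `X_{(2)}` is drawn, the restricted features give the optimal arm `a₂` the
score `-θ₂` and arms `a₃, a₄` the score `0`. As the estimate converges in probability to a limit
with `θ₂ = 1/16 > 0`, with probability tending to one a greedy nominator does not nominate `a₂`,
so the ranker misses the optimal arm and pays regret at least `1/6`. Markov's inequality turns
this into a per-round bound on the expected regret, and Cesàro averaging transfers the greedy
frequency `δ` to the limsup of the average regret.
-/

open MeasureTheory ProbabilityTheory Filter Topology

section Cesaro

theorem le_limsup_of_mul_sub_le {ι : Type*} {l : Filter ι} {f g h : ι → ℝ} {a c : ℝ}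
    (hc : 0 ≤ c) (hf : IsCoboundedUnder (· ≤ ·) l f) (hg : IsBoundedUnder (· ≤ ·) l g)
    (hh : Tendsto h l (𝓝 0)) (hfgh : ∀ i, c * f i - h i ≤ g i) (ha : a ≤ limsup f l) :
    c * a ≤ limsup g l := by
  refine le_of_forall_sub_le fun ε hε => ?_
  obtain ⟨η, hη, hε_eq⟩ : ∃ η > 0, c * η + η = ε :=
    ⟨ε / (c + 1), by positivity, by field_simp⟩
  have hf_freq : ∃ᶠ i in l, a - η < f i := frequently_lt_of_lt_limsup hf (by linarith)
  have hh_ev : ∀ᶠ i in l, h i < η := hh.eventually (gt_mem_nhds hη)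
  refine le_limsup_of_frequently_le ((hf_freq.and_eventually hh_ev).mono ?_) hg
  rintro i ⟨hfi, hhi⟩
  nlinarith [hfgh i, mul_le_mul_of_nonneg_left hfi.le hc]

theorem le_limsup_cesaro_of_mul_sub_le {x y z : ℕ → ℝ} {a c B : ℝ} (hc : 0 ≤ c)
    (hx : ∀ t, 0 ≤ x t) (hzB : ∀ t, z t ≤ B) (hy : Tendsto y atTop (𝓝 0))
    (hxyz : ∀ t, c * x t - y t ≤ z t)
    (ha : a ≤ limsup (fun T : ℕ => (∑ t ∈ Finset.range T, x t) / T) atTop) :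
    c * a ≤ limsup (fun T : ℕ => (∑ t ∈ Finset.range T, z t) / T) atTop := by
  refine le_limsup_of_mul_sub_le hc ?_ ?_ (h := fun T : ℕ => (∑ t ∈ Finset.range T, y t) / T)
    ?_ (fun T => ?_) ha
  · exact (isBoundedUnder_of ⟨0, fun T =>
      div_nonneg (Finset.sum_nonneg fun t _ => hx t) T.cast_nonneg⟩).isCoboundedUnder_le
  · refine ⟨B, eventually_map.2 ?_⟩
    filter_upwards [eventually_gt_atTop 0] with T hT
    rw [div_le_iff₀ (by positivity)]
    simpa [mul_comm] using Finset.sum_le_card_nsmul (Finset.range T) _ _ fun t _ => hzB t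
  · simpa only [div_eq_inv_mul] using hy.cesaro
  · have hsum : c * ∑ t ∈ Finset.range T, x t - ∑ t ∈ Finset.range T, y t
        ≤ ∑ t ∈ Finset.range T, z t := by
      rw [Finset.mul_sum, ← Finset.sum_sub_distrib]
      exact Finset.sum_le_sum fun t _ => hxyz t
    calc c * ((∑ t ∈ Finset.range T, x t) / T) - (∑ t ∈ Finset.range T, y t) / T
        = (c * ∑ t ∈ Finset.range T, x t - ∑ t ∈ Finset.range T, y t) / T := by ring
      _ ≤ (∑ t ∈ Finset.range T, z t) / T := by gcongr

end Cesaro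

section Measure

variable {Ω : Type*} [MeasurableSpace Ω] {μ : Measure Ω}

theorem MeasureTheory.TendstoInMeasure.tendsto_measureReal_notMem {ι E : Type*}
    [PseudoMetricSpace E] [IsFiniteMeasure μ] {l : Filter ι} {f : ι → Ω → E} {x : E}
    (hf : TendstoInMeasure μ f l fun _ => x) {U : Set E} (hU : U ∈ 𝓝 x) :
    Tendsto (fun i => μ.real {ω | f i ω ∉ U}) l (𝓝 0) := by
  obtain ⟨ε, hε, hball⟩ := Metric.mem_nhds_iff.1 hU
  refine squeeze_zero (fun _ => measureReal_nonneg) (fun i => measureReal_mono ?_)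
    (tendstoInMeasure_iff_measureReal_dist.1 hf ε hε)
  intro ω hω
  by_contra hlt
  exact hω (hball (by simpa [Metric.mem_ball] using hlt))

/-- Markov's inequality outside an exceptional set `B`. -/
theorem mul_measureReal_sub_le_integral [IsFiniteMeasure μ] {f : Ω → ℝ} (hf : 0 ≤ f)
    (hfi : Integrable f μ) {c : ℝ} (hc : 0 ≤ c) {S B : Set Ω}
    (hS : S ⊆ {ω | c ≤ f ω} ∪ B) :
    c * (μ.real S - μ.real B) ≤ ∫ ω, f ω ∂μ := by
  have hS_le : μ.real S ≤ μ.real {ω | c ≤ f ω} + μ.real B :=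
    (measureReal_mono hS).trans (measureReal_union_le _ _)
  calc c * (μ.real S - μ.real B) ≤ c * μ.real {ω | c ≤ f ω} := by gcongr; linarith
    _ ≤ ∫ ω, f ω ∂μ := mul_meas_ge_le_integral_of_nonneg (Eventually.of_forall hf) hfi c

end Measure

section Regret

variable {α : Type*} [DecidableEq α] (r : α → ℝ) (k b : α)

def instantRegret : ℝ := r k - if b = k then r k else 0

variable {r k b}

theorem instantRegret_mem_Icc (hr : r k ∈ Set.Icc 0 1) : instantRegret r k b ∈ Set.Icc 0 1 := by
  obtain ⟨hr0, hr1⟩ := hr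
  unfold instantRegret
  split_ifs <;> constructor <;> linarith

theorem instantRegret_of_ne (h : b ≠ k) : instantRegret r k b = r k := by
  simp [instantRegret, h]

theorem integrable_instantRegret {Ω : Type*} [MeasurableSpace Ω] {μ : Measure Ω}
    [IsFiniteMeasure μ] [MeasurableSpace α] [MeasurableSingletonClass α] [Countable α]
    (hr : ∀ k, r k ∈ Set.Icc 0 1) {J A : Ω → α} (hJ : Measurable J) (hA : Measurable A) :
    Integrable (fun ω => instantRegret r (J ω) (A ω)) μ := by
  have hmeas : Measurable fun ω => instantRegret r (J ω) (A ω) :=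
    (measurable_of_countable fun p : α × α => instantRegret r p.1 p.2).comp (hJ.prodMk hA)
  refine .of_bound hmeas.aestronglyMeasurable 1 (.of_forall fun ω => ?_)
  obtain ⟨h0, h1⟩ := instantRegret_mem_Icc (b := A ω) (hr (J ω))
  rwa [Real.norm_of_nonneg h0]

end Regret

section Construction

noncomputable def meanReward : Fin 4 → ℝ := ![3 / 4, 7 / 8, 1 / 6, 1]

theorem meanReward_mem_Icc (k : Fin 4) : meanReward k ∈ Set.Icc 0 1 := by
  fin_cases k <;> norm_num [meanReward]

def contextMatrix : Matrix (Fin 4) (Fin 4) ℝ :=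
  !![1, 0, 0, (-1 : ℝ); 0, 1, 0, -1; 0, 0, 1, 0; 0, 0, 0, 1]

def restrictedFeature (k b : Fin 4) : ℝ × ℝ :=
  if b = k then (contextMatrix b 2, contextMatrix b 3) else (0, 0)

def fittedScore (θ : ℝ × ℝ) (k b : Fin 4) : ℝ :=
  θ.1 * (restrictedFeature k b).1 + θ.2 * (restrictedFeature k b).2

/-- Indices are `0`-based: context `1` is `X_{(2)}` and arm `n` is `a_{n+1}`. -/
theorem ne_one_of_forall_fittedScore_le {θ : ℝ × ℝ} (hθ : 0 < θ.2) {n : Fin 4}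
    (hn : ∀ b : Fin 4, b ≠ 0 → fittedScore θ 1 b ≤ fittedScore θ 1 n) : n ≠ 1 := by
  rintro rfl
  have hscore₂ : fittedScore θ 1 1 = -θ.2 := by simp [fittedScore, restrictedFeature, contextMatrix]
  have hscore₃ : fittedScore θ 1 2 = 0 := by simp [fittedScore, restrictedFeature]
  linarith [hn 2 (by decide)]

theorem one_div_six_le_instantRegret_of_greedy {θ : ℝ × ℝ} (hθ : 0 < θ.2) {n a : Fin 4}
    (hn : ∀ b : Fin 4, b ≠ 0 → fittedScore θ 1 b ≤ fittedScore θ 1 n)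
    (ha : a = 0 ∨ a = n) : 1 / 6 ≤ instantRegret meanReward 1 a := by
  have hn1 := ne_one_of_forall_fittedScore_le hθ hn
  have ha1 : a ≠ 1 := by rcases ha with rfl | rfl <;> simp [hn1]
  rw [instantRegret_of_ne ha1]
  norm_num [meanReward]

end Construction

theorem training_on_own_linear_regret_general
    {Ω : Type*} [MeasurableSpace Ω] (μ : Measure Ω) [IsProbabilityMeasure μ]
    -- context index: X_{(j t)} is drawn at round t, uniformly
    (j : ℕ → Ω → Fin 4) (hjmeas : ∀ t, Measurable (j t))
    -- the nominator's estimate converges in probability to (1/6, 1/16)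
    (θhat : ℕ → Ω → ℝ × ℝ)
    (hθconv : TendstoInMeasure μ θhat atTop
      (fun _ => ((1 / 6 : ℝ), (1 / 16 : ℝ))))
    -- nominator 2 nominates from its pool {a₂, a₃, a₄} (indices ≠ 0)
    (N2 : ℕ → Ω → Fin 4)
    -- the ranker chooses from the candidate pool {a₁, nominee}
    (a : ℕ → Ω → Fin 4) (hameas : ∀ t, Measurable (a t))
    (hchoice : ∀ t ω, a t ω = 0 ∨ a t ω = N2 t ω)
    (δ : ℝ) :
    -- restricted features: under context X_{(k)}, arm b has the last two
    -- coordinates of row b of X_{(k)}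
    let rbar : Fin 4 → ℝ := ![3 / 4, 7 / 8, 1 / 6, 1]
    let X : Matrix (Fin 4) (Fin 4) ℝ :=
      !![1, 0, 0, (-1 : ℝ); 0, 1, 0, -1; 0, 0, 1, 0; 0, 0, 0, 1]
    let φ : Fin 4 → Fin 4 → ℝ × ℝ :=
      fun k b => if b = k then (X b 2, X b 3) else (0, 0)
    let score : ℝ × ℝ → Fin 4 → Fin 4 → ℝ :=
      fun θ k b => θ.1 * (φ k b).1 + θ.2 * (φ k b).2
    -- greedy event: the nominee maximizes the fitted score over the pool
    let G : ℕ → Set Ω := fun t =>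
      {ω | ∀ b : Fin 4, b ≠ 0 →
        score (θhat t ω) (j t ω) b ≤ score (θhat t ω) (j t ω) (N2 t ω)}
    -- greedy-selection assumption conditioned on the optimal arm being a₂
    δ ≤ atTop.limsup (fun T : ℕ =>
        (∑ t ∈ Finset.range T,
          4 * (μ (G t ∩ {ω | j t ω = 1})).toReal) / T) →
    -- conclusion: linear expected two-stage regret, with Δ = 1/6
    (1 / 6 : ℝ) * δ / 4 ≤ atTop.limsup (fun T : ℕ =>
        (∫ ω, (∑ t ∈ Finset.range T,
          (rbar (j t ω) -
            if a t ω = j t ω then rbar (j t ω) else 0)) ∂μ) / T) := by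
  intro rbar X φ score G hgreedy
  set regret : ℕ → Ω → ℝ := fun t ω => instantRegret meanReward (j t ω) (a t ω)
  have hregret_int : ∀ t, Integrable (regret t) μ := fun t =>
    integrable_instantRegret meanReward_mem_Icc (hjmeas t) (hameas t)
  set U : Set (ℝ × ℝ) := {p | 0 < p.2}
  have hmiss : ∀ t,
      G t ∩ {ω | j t ω = 1} ⊆ {ω | 1 / 6 ≤ regret t ω} ∪ {ω | θhat t ω ∉ U} := by
    rintro t ω ⟨hG, hj : j t ω = 1⟩
    by_cases hθ : 0 < (θhat t ω).2
    · left
      show 1 / 6 ≤ instantRegret meanReward (j t ω) (a t ω)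
      rw [hj]
      exact one_div_six_le_instantRegret_of_greedy hθ (hj ▸ hG) (hchoice t ω)
    · exact Or.inr hθ
  have hround : ∀ t, 1 / 24 * (4 * (μ (G t ∩ {ω | j t ω = 1})).toReal)
      - 1 / 6 * μ.real {ω | θhat t ω ∉ U} ≤ ∫ ω, regret t ω ∂μ := fun t => by
    have := mul_measureReal_sub_le_integral (fun ω => (instantRegret_mem_Icc
      (meanReward_mem_Icc _)).1) (hregret_int t) (by norm_num) (hmiss t)
    rw [measureReal_def] at this
    linarith
  have hexcept : Tendsto (fun t => 1 / 6 * μ.real {ω | θhat t ω ∉ U}) atTop (𝓝 0) := by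
    have hU : U ∈ 𝓝 ((1 / 6 : ℝ), (1 / 16 : ℝ)) :=
      (isOpen_lt continuous_const continuous_snd).mem_nhds (by norm_num)
    simpa only [mul_zero] using (hθconv.tendsto_measureReal_notMem hU).const_mul (1 / 6)
  have hlimsup := le_limsup_cesaro_of_mul_sub_le (B := 1) (by norm_num) (fun t => by positivity)
    (fun t => (integral_mono (hregret_int t) (integrable_const 1)
      fun ω => (instantRegret_mem_Icc (meanReward_mem_Icc _)).2).trans (by simp))
    hexcept hround hgreedy
  show _ ≤ limsup (fun T : ℕ => (∫ ω, ∑ t ∈ Finset.range T, regret t ω ∂μ) / T) atTop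
  simp only [integral_finsetSum _ fun t _ => hregret_int t]
  linarith

/-- Bandit construction of Proposition 2: contexts drawn uniformly from
`{X_{(1)},…,X_{(4)}}` with `X = [[1,0,0,−1],[0,1,0,−1],[0,0,1,0],[0,0,0,1]]`
and `r̄ = (3/4, 7/8, 1/6, 1)`; nominator 2 (pool `{a₂,a₃,a₄}`) sees the last
two feature columns and satisfies the greedy-selection assumption with
constant `δ > 0`. If its estimate converges in probability to the
training-on-own limit `θ₂* = (1/6, 1/16)`, then
`limsup_T E[R_T^{2s}]/T ≥ Δδ/4` with `Δ = 1/6`. -/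
theorem training_on_own_linear_regret
    {Ω : Type*} [MeasurableSpace Ω] (μ : Measure Ω) [IsProbabilityMeasure μ]
    -- context index: X_{(j t)} is drawn at round t, uniformly
    (j : ℕ → Ω → Fin 4) (hjmeas : ∀ t, Measurable (j t))
    (hjunif : ∀ t (k : Fin 4), μ {ω | j t ω = k} = 1 / 4)
    -- the nominator's estimate converges in probability to (1/6, 1/16)
    (θhat : ℕ → Ω → ℝ × ℝ) (hθmeas : ∀ t, Measurable (θhat t))
    (hθconv : TendstoInMeasure μ θhat atTop
      (fun _ => ((1 / 6 : ℝ), (1 / 16 : ℝ))))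
    -- nominator 2 nominates from its pool {a₂, a₃, a₄} (indices ≠ 0)
    (N2 : ℕ → Ω → Fin 4) (hNmeas : ∀ t, Measurable (N2 t))
    (hpool : ∀ t ω, N2 t ω ≠ 0)
    -- the ranker chooses from the candidate pool {a₁, nominee}
    (a : ℕ → Ω → Fin 4) (hameas : ∀ t, Measurable (a t))
    (hchoice : ∀ t ω, a t ω = 0 ∨ a t ω = N2 t ω)
    (δ : ℝ) (hδ : 0 < δ) :
    -- restricted features: under context X_{(k)}, arm b has the last two
    -- coordinates of row b of X_{(k)}
    let rbar : Fin 4 → ℝ := ![3 / 4, 7 / 8, 1 / 6, 1]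
    let X : Matrix (Fin 4) (Fin 4) ℝ :=
      !![1, 0, 0, (-1 : ℝ); 0, 1, 0, -1; 0, 0, 1, 0; 0, 0, 0, 1]
    let φ : Fin 4 → Fin 4 → ℝ × ℝ :=
      fun k b => if b = k then (X b 2, X b 3) else (0, 0)
    let score : ℝ × ℝ → Fin 4 → Fin 4 → ℝ :=
      fun θ k b => θ.1 * (φ k b).1 + θ.2 * (φ k b).2
    -- greedy event: the nominee maximizes the fitted score over the pool
    let G : ℕ → Set Ω := fun t =>
      {ω | ∀ b : Fin 4, b ≠ 0 →
        score (θhat t ω) (j t ω) b ≤ score (θhat t ω) (j t ω) (N2 t ω)}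
    -- greedy-selection assumption conditioned on the optimal arm being a₂
    δ ≤ atTop.limsup (fun T : ℕ =>
        (∑ t ∈ Finset.range T,
          4 * (μ (G t ∩ {ω | j t ω = 1})).toReal) / T) →
    -- conclusion: linear expected two-stage regret, with Δ = 1/6
    (1 / 6 : ℝ) * δ / 4 ≤ atTop.limsup (fun T : ℕ =>
        (∫ ω, (∑ t ∈ Finset.range T,
          (rbar (j t ω) -
            if a t ω = j t ω then rbar (j t ω) else 0)) ∂μ) / T) :=
  training_on_own_linear_regret_general μ j hjmeas θhat hθconv N2 a hameas hchoice δ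
end

section
/- For the 'training-on-all' weighted least squares with features (0,−1), (0,−1), (1,0), (0,1) and rewards r̄ = (3/4, 7/8, 1/6, 1), the limit solution is θ = (1/6, (1 − 7/8 − 3/4)/3) = (1/6, −5/24), whose second coordinate is strictly negative, so a greedy nominator using θ prefers the zero-feature arms over the arm with feature (0,1) (the optimal arm a₄ under context X_{(4)}), whereas 'training-on-own' (dropping the first data point) yields θ' = (1/6, 1/16) with strictly positive second coordinate, which correctly ranks the (0,1) arm highest. -/
open Finset

/-! Both objectives separate into a term in `β.1` alone, vanishing at `β.1 = 1/6`, and a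
one-dimensional least-squares problem in `β.2`. The latter is minimized wherever the normal
equation holds, since the cross term of the expansion around such a point vanishes; this gives
`β.2 = (r₄ - r₂ - r₁)/3` with all data and `β.2 = (r₄ - r₂)/2` without the first point. -/

section LeastSquares

variable {ι : Type*} (s : Finset ι) (c r : ι → ℝ)

theorem sum_sq_sub_mul_eq (t₀ t : ℝ) :
    ∑ i ∈ s, (r i - c i * t) ^ 2 =
      ∑ i ∈ s, (r i - c i * t₀) ^ 2 - 2 * (t - t₀) * ∑ i ∈ s, c i * (r i - c i * t₀)
        + (t - t₀) ^ 2 * ∑ i ∈ s, c i ^ 2 := by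
  simp only [mul_sum, ← sum_sub_distrib, ← sum_add_distrib]
  exact sum_congr rfl fun i _ => by ring

theorem sum_sq_sub_mul_le_of_normal_eq {t₀ : ℝ}
    (h : ∑ i ∈ s, c i * (r i - c i * t₀) = 0) (t : ℝ) :
    ∑ i ∈ s, (r i - c i * t₀) ^ 2 ≤ ∑ i ∈ s, (r i - c i * t) ^ 2 := by
  rw [sum_sq_sub_mul_eq s c r t₀ t, h]
  have : 0 ≤ (t - t₀) ^ 2 * ∑ i ∈ s, c i ^ 2 := by positivity
  linarith

end LeastSquares

/-- For training-on-all weighted least squares with restricted features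
`(0,−1), (0,−1), (1,0), (0,1)` and rewards `r̄ = (3/4, 7/8, 1/6, 1)`, the
limit solution is `θ = (1/6, −5/24)`: its second coordinate is negative, so a
greedy nominator prefers the zero-feature arms over the arm with feature
`(0,1)` (optimal under `X_{(4)}`); training-on-own (dropping the first data
point) yields `θ' = (1/6, 1/16)` with positive second coordinate, which
correctly ranks the `(0,1)` arm highest. -/
theorem training_on_all_vs_own_weighted_least_squares :
    let r1 : ℝ := 3 / 4
    let r2 : ℝ := 7 / 8
    let r3 : ℝ := 1 / 6
    let r4 : ℝ := 1
    let x1 : ℝ × ℝ := (0, -1)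
    let x2 : ℝ × ℝ := (0, -1)
    let x3 : ℝ × ℝ := (1, 0)
    let x4 : ℝ × ℝ := (0, 1)
    let dot : ℝ × ℝ → ℝ × ℝ → ℝ := fun u v => u.1 * v.1 + u.2 * v.2
    let θ : ℝ × ℝ := (1 / 6, -(5 / 24))
    let θ' : ℝ × ℝ := (1 / 6, 1 / 16)
    -- θ minimizes the training-on-all objective
    (∀ β : ℝ × ℝ,
      (r1 - dot θ x1) ^ 2 + (r2 - dot θ x2) ^ 2 + (r3 - dot θ x3) ^ 2
          + (r4 - dot θ x4) ^ 2
        ≤ (r1 - dot β x1) ^ 2 + (r2 - dot β x2) ^ 2 + (r3 - dot β x3) ^ 2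
          + (r4 - dot β x4) ^ 2)
    ∧ θ.2 = (r4 - r2 - r1) / 3
    ∧ θ.2 < 0
    -- greedy with θ prefers zero-feature arms over the (0,1) arm
    ∧ dot θ x4 < 0
    -- θ' minimizes the training-on-own objective (first data point dropped)
    ∧ (∀ β : ℝ × ℝ,
        (r2 - dot θ' x2) ^ 2 + (r3 - dot θ' x3) ^ 2 + (r4 - dot θ' x4) ^ 2
          ≤ (r2 - dot β x2) ^ 2 + (r3 - dot β x3) ^ 2 + (r4 - dot β x4) ^ 2)
    ∧ θ'.2 = (r4 - r2) / 2
    ∧ 0 < θ'.2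
    -- θ' correctly ranks the (0,1) arm highest (others score 0 under X₍₄₎)
    ∧ 0 < dot θ' x4 := by
  intro r1 r2 r3 r4 x1 x2 x3 x4 dot θ θ'
  refine ⟨fun β => ?_, by norm_num, by norm_num, by norm_num [dot, θ, x4], fun β => ?_,
    by norm_num, by norm_num, by norm_num [dot, θ', x4]⟩
  · have normal_eq : ∑ i, ![-1, -1, 1] i * (![r1, r2, r4] i - ![-1, -1, 1] i * θ.2) = 0 := by
      simp only [Fin.sum_univ_three, Matrix.cons_val]
      norm_num [r1, r2, r4, θ]
    have h := sum_sq_sub_mul_le_of_normal_eq univ _ _ normal_eq β.2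
    simp only [Fin.sum_univ_three, Matrix.cons_val] at h
    norm_num [dot, θ, x1, x2, x3, x4, r3] at h ⊢
    linarith [sq_nonneg (1 / 6 - β.1)]
  · have normal_eq : ∑ i, ![-1, 1] i * (![r2, r4] i - ![-1, 1] i * θ'.2) = 0 := by
      norm_num [Fin.sum_univ_two, r2, r4, θ']
    have h := sum_sq_sub_mul_le_of_normal_eq univ _ _ normal_eq β.2
    simp only [Fin.sum_univ_two] at h
    norm_num [dot, θ', x2, x3, x4, r3] at h ⊢
    linarith [sq_nonneg (1 / 6 - β.1)]
end
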